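/- Predictable deadlocks induced by a sound lock set function are stuck (two-request case): let {q_1, q_2} be a predictable deadlock under the trace-based lock set LH_all, with witness T' (a correctly reordered prefix of T in which q_1 and q_2 are final events), and let a_1 be the acquire fulfilling q_1 in T. Then there is no trace T'' such that T' · T'' · [a_1] is a well-formed correctly reordered prefix of T. -/

import Mathlib

inductive Op where
  | read : ℕ → Op
  | write : ℕ → Op
  | req : ℕ → Op
  | acq : ℕ → Op
  | rel : ℕ → Op
deriving DecidableEq

structure Event where
  id : ℕ
  thd : ℕ
  op : Op
deriving DecidableEq

/-- Trace order: `e` occurs strictly before `f` in trace `T`. -/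
def TrLt (T : List Event) (e f : Event) : Prop :=
  e ∈ T ∧ f ∈ T ∧ T.idxOf e < T.idxOf f

def IsAcq (e : Event) (l : ℕ) : Prop := e.op = Op.acq l
def IsRel (e : Event) (l : ℕ) : Prop := e.op = Op.rel l
def IsRead (e : Event) (x : ℕ) : Prop := e.op = Op.read x
def IsWrite (e : Event) (x : ℕ) : Prop := e.op = Op.write x
def IsReq (e : Event) (l : ℕ) : Prop := e.op = Op.req l

/-- `r` is the matching release of acquire `a` in `T`. -/
def Matches (T : List Event) (a r : Event) : Prop :=
  ∃ l, IsAcq a l ∧ IsRel r l ∧ a.thd = r.thd ∧ TrLt T a r ∧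
    ∀ r' ∈ T, IsRel r' l → ¬ (TrLt T a r' ∧ TrLt T r' r)

/-- Well-formedness of a trace. -/
structure WF (T : List Event) : Prop where
  nodup : T.Nodup
  wfAcq : ∀ a a' l, a ∈ T → a' ∈ T → IsAcq a l → IsAcq a' l → TrLt T a a' →
    ∃ r ∈ T, IsRel r l ∧ r.thd = a.thd ∧ TrLt T a r ∧ TrLt T r a'
  wfRel : ∀ r l, r ∈ T → IsRel r l →
    ∃ a ∈ T, IsAcq a l ∧ a.thd = r.thd ∧ TrLt T a r ∧
      ∀ r' ∈ T, IsRel r' l → ¬ (TrLt T a r' ∧ TrLt T r' r)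
  wfReqBefore : ∀ a l, a ∈ T → IsAcq a l →
    ∃ q ∈ T, IsReq q l ∧ q.thd = a.thd ∧ TrLt T q a ∧
      ∀ f ∈ T, f.thd = a.thd → ¬ (TrLt T q f ∧ TrLt T f a)
  wfReqAfter : ∀ q l e, q ∈ T → IsReq q l → e ∈ T → e.thd = q.thd → TrLt T q e →
    (∀ f ∈ T, f.thd = q.thd → ¬ (TrLt T q f ∧ TrLt T f e)) → IsAcq e l

/-- Projection of a trace onto a thread. -/
def projT (T : List Event) (t : ℕ) : List Event := T.filter (fun e => e.thd = t)

/-- `w` is the last write observed by read `e` in `T`. -/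
def LastWrite (T : List Event) (w e : Event) : Prop :=
  ∃ x, IsRead e x ∧ IsWrite w x ∧ TrLt T w e ∧
    ∀ w' ∈ T, IsWrite w' x → ¬ (TrLt T w w' ∧ TrLt T w' e)

/-- `T'` is a correctly reordered prefix of `T`. -/
def CRP (T T' : List Event) : Prop :=
  WF T' ∧ (∀ e ∈ T', e ∈ T) ∧
  (∀ t, (projT T' t) <+: (projT T t)) ∧
  (∀ e w, e ∈ T' → LastWrite T w e → LastWrite T' w e)

/-- `e` must precede `f` under all correctly reordered prefixes. -/
def MustPrecede (T : List Event) (e f : Event) : Prop :=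
  ∀ T', CRP T T' → f ∈ T' → e ∈ T' ∧ TrLt T' e f

/-- Thread order. -/
def ThreadLt (T : List Event) (e f : Event) : Prop :=
  e.thd = f.thd ∧ TrLt T e f

/-- Last-write order: smallest transitive relation containing thread order
and last-write dependencies. -/
inductive LWOrder (T : List Event) : Event → Event → Prop
  | to : ∀ e f, ThreadLt T e f → LWOrder T e f
  | lw : ∀ w e, LastWrite T w e → LWOrder T w e
  | trans : ∀ e f g, LWOrder T e f → LWOrder T f g → LWOrder T e g

/-- `e` is inside the thread-order critical section of acquire `a` with
matching release `r`. -/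
def InCSto (T : List Event) (a r e : Event) : Prop :=
  Matches T a r ∧ ThreadLt T a e ∧ ThreadLt T e r

/-- Release order. -/
inductive ROOrder (T : List Event) : Event → Event → Prop
  | lw : ∀ e f, LWOrder T e f → ROOrder T e f
  | rel : ∀ a r a' r' e f l, Matches T a r → Matches T a' r' → a ≠ a' →
      IsAcq a l → IsAcq a' l → InCSto T a r e → InCSto T a' r' f →
      LWOrder T e f → ROOrder T r f
  | trans : ∀ e f g, ROOrder T e f → ROOrder T f g → ROOrder T e g

/-- CS-Match: no other release on `l` in thread of `a` can come between `a`
and `e` in any correctly reordered prefix. -/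
def CSMatch (T : List Event) (a e : Event) (l : ℕ) : Prop :=
  ¬ ∃ r' T', r' ∈ T ∧ IsRel r' l ∧ r'.thd = a.thd ∧ CRP T T' ∧
    TrLt T' a r' ∧ TrLt T' r' e

/-- Trace-based critical section membership. -/
def InCSAll (T : List Event) (a r e : Event) : Prop :=
  ∃ l, IsAcq a l ∧ IsRel r l ∧ a.thd = r.thd ∧ a ∈ T ∧ r ∈ T ∧
    MustPrecede T a e ∧ MustPrecede T e r ∧ CSMatch T a e l

/-- Partial-order-based critical section membership. -/
def InCSP (T : List Event) (P : Event → Event → Prop) (a r e : Event) : Prop :=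
  ∃ l, IsAcq a l ∧ IsRel r l ∧ a.thd = r.thd ∧ a ∈ T ∧ r ∈ T ∧
    P a e ∧ P e r ∧ CSMatch T a e l

/-- Trace-based lock set. -/
def LHAll (T : List Event) (e : Event) : Set (ℕ × ℕ) :=
  { p | ∃ a r, IsAcq a p.1 ∧ a.thd = p.2 ∧ InCSAll T a r e }

/-- Partial-order-based lock set. -/
def LHP (T : List Event) (P : Event → Event → Prop) (e : Event) : Set (ℕ × ℕ) :=
  { p | ∃ a r, IsAcq a p.1 ∧ a.thd = p.2 ∧ InCSP T P a r e }

/-- Guard intersection: common locks held by distinct threads. -/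
def HatInter (M N : Set (ℕ × ℕ)) : Set ℕ :=
  { l | ∃ s t, (l, s) ∈ M ∧ (l, t) ∈ N ∧ s ≠ t }

/-- `e` is final in `T'`: no later event of the same thread. -/
def Final (T' : List Event) (e : Event) : Prop :=
  e ∈ T' ∧ ∀ f ∈ T', f.thd = e.thd → ¬ TrLt T' e f

/-- `a` is the acquire fulfilling request `q` in `T`. -/
def Fulfills (T : List Event) (q a : Event) : Prop :=
  ∃ l, IsReq q l ∧ IsAcq a l ∧ a.thd = q.thd ∧ TrLt T q a ∧
    ∀ f ∈ T, f.thd = q.thd → ¬ (TrLt T q f ∧ TrLt T f a)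

/-- `T'` is sync preserving w.r.t. `T`. -/
def SyncPreserving (T T' : List Event) : Prop :=
  ∀ a a' l, a ∈ T' → a' ∈ T' → IsAcq a l → IsAcq a' l → a ≠ a' →
    (TrLt T' a a' ↔ TrLt T a a')

/-- Sync-preserving closure of a set of events. -/
inductive SPClosure (T : List Event) (S : Set Event) : Event → Prop
  | base : ∀ e, e ∈ S → SPClosure T S e
  | lwc : ∀ e f, LWOrder T e f → SPClosure T S f → SPClosure T S e
  | spc : ∀ a a' r l, IsAcq a l → IsAcq a' l → a ≠ a' → TrLt T a a' →
      Matches T a r → SPClosure T S a' → SPClosure T S r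

section Helpers

open List

lemma trLt_irrefl (S : List Event) (x : Event) : ¬ TrLt S x x := by
  rintro ⟨_, _, h⟩; exact lt_irrefl _ h

lemma trLt_ne {S : List Event} {x y : Event} (h : TrLt S x y) : x ≠ y := by
  rintro rfl; exact trLt_irrefl S x h

lemma trLt_asymm {S : List Event} {x y : Event} (h : TrLt S x y) : ¬ TrLt S y x := by
  rintro ⟨_, _, h'⟩; exact absurd h.2.2 (Nat.not_lt.2 h'.le)

lemma trLt_trans {S : List Event} {x y z : Event} (h1 : TrLt S x y) (h2 : TrLt S y z) :
    TrLt S x z :=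
  ⟨h1.1, h2.2.1, h1.2.2.trans h2.2.2⟩

lemma trLt_tri {S : List Event} {x y : Event} (hx : x ∈ S) (hy : y ∈ S) (hne : x ≠ y) :
    TrLt S x y ∨ TrLt S y x := by
  rcases lt_trichotomy (S.idxOf x) (S.idxOf y) with h | h | h
  · exact Or.inl ⟨hx, hy, h⟩
  · exact absurd ((List.idxOf_inj hx).1 h) hne
  · exact Or.inr ⟨hy, hx, h⟩

lemma sublist_indexOf_lt {l' l : List Event} (hs : l' <+ l) :
    l.Nodup → ∀ x y : Event, x ∈ l' → y ∈ l' → l.idxOf x < l.idxOf y →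
      l'.idxOf x < l'.idxOf y := by
  induction hs with
  | slnil => intro _ x y hx _ _; simp at hx
  | @cons l₁ l₂ a hs ih =>
      intro hn x y hx hy hlt
      have hn2 := (List.nodup_cons.1 hn).2
      have hanotin := (List.nodup_cons.1 hn).1
      have hxa : a ≠ x := fun h => hanotin (h ▸ hs.subset hx)
      have hya : a ≠ y := fun h => hanotin (h ▸ hs.subset hy)
      rw [List.idxOf_cons_ne _ hxa, List.idxOf_cons_ne _ hya] at hlt
      exact ih hn2 x y hx hy (Nat.succ_lt_succ_iff.1 hlt)
  | @cons_cons l₁ l₂ a hs ih =>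
      intro hn x y hx hy hlt
      have hn2 := (List.nodup_cons.1 hn).2
      have hanotin := (List.nodup_cons.1 hn).1
      by_cases hxa : x = a
      · subst hxa
        by_cases hya : y = x
        · subst hya; exact absurd hlt (lt_irrefl _)
        · rw [List.idxOf_cons_self]
          have hyl : y ∈ l₁ := by
            rcases List.mem_cons.1 hy with h | h
            · exact absurd h hya
            · exact h
          rw [List.idxOf_cons_ne _ (fun h => hya h.symm)]
          exact Nat.succ_pos _
      · by_cases hya : y = a
        · subst hya
          rw [List.idxOf_cons_self, List.idxOf_cons_ne _ (fun h => hxa h.symm)] at hlt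
          exact absurd hlt (Nat.not_lt_zero _)
        · have hxl : x ∈ l₁ := by
            rcases List.mem_cons.1 hx with h | h
            · exact absurd h hxa
            · exact h
          have hyl : y ∈ l₁ := by
            rcases List.mem_cons.1 hy with h | h
            · exact absurd h hya
            · exact h
          rw [List.idxOf_cons_ne _ (fun h => hxa h.symm),
            List.idxOf_cons_ne _ (fun h => hya h.symm)] at hlt ⊢
          exact Nat.succ_lt_succ (ih hn2 x y hxl hyl (Nat.succ_lt_succ_iff.1 hlt))

lemma sublist_trLt {l' l : List Event} (hs : l' <+ l) (hn : l.Nodup)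
    {x y : Event} (hx : x ∈ l') (hy : y ∈ l') (h : TrLt l x y) : TrLt l' x y :=
  ⟨hx, hy, sublist_indexOf_lt hs hn x y hx hy h.2.2⟩

lemma sublist_trLt' {l' l : List Event} (hs : l' <+ l) (hn : l.Nodup)
    {x y : Event} (h : TrLt l' x y) : TrLt l x y := by
  have hx := hs.subset h.1
  have hy := hs.subset h.2.1
  have hne : x ≠ y := trLt_ne h
  rcases trLt_tri hx hy hne with h' | h'
  · exact h'
  · exact absurd (sublist_trLt hs hn h.2.1 h.1 h') (trLt_asymm h)

lemma prefix_indexOf {l' l : List Event} (hp : l' <+: l) {x : Event} (hx : x ∈ l') :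
    l.idxOf x = l'.idxOf x := by
  obtain ⟨r, rfl⟩ := hp
  exact List.idxOf_append_of_mem hx

lemma prefix_trLt {l' l : List Event} (hp : l' <+: l) {x y : Event}
    (hx : x ∈ l') (hy : y ∈ l') : TrLt l' x y ↔ TrLt l x y := by
  constructor
  · rintro ⟨_, _, h⟩
    exact ⟨hp.subset hx, hp.subset hy, by
      rw [prefix_indexOf hp hx, prefix_indexOf hp hy]; exact h⟩
  · rintro ⟨_, _, h⟩
    rw [prefix_indexOf hp hx, prefix_indexOf hp hy] at h
    exact ⟨hx, hy, h⟩

lemma mem_take_of_indexOf {l : List Event} {x : Event} {n : ℕ} (hx : x ∈ l)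
    (h : l.idxOf x < n) : x ∈ l.take n := by
  have hlen : l.idxOf x < l.length := List.idxOf_lt_length_iff.2 hx
  have h1 : l.idxOf x < (l.take n).length := by
    rw [List.length_take]; exact lt_min h hlen
  have h2 : (l.take n)[l.idxOf x] = x := by
    rw [List.getElem_take]
    exact List.getElem_idxOf hlen
  exact h2 ▸ List.getElem_mem h1

lemma indexOf_lt_of_mem_take {l : List Event} {x : Event} {n : ℕ} (hx : x ∈ l.take n) :
    l.idxOf x < n := by
  have hp : l.take n <+: l := List.take_prefix n l
  rw [prefix_indexOf hp hx]
  exact lt_of_lt_of_le (List.idxOf_lt_length_iff.2 hx) (List.length_take_le n l)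

lemma mem_projT {S : List Event} {u : ℕ} {x : Event} : x ∈ projT S u ↔ x ∈ S ∧ x.thd = u := by
  simp [projT]

lemma projT_sublist (S : List Event) (u : ℕ) : projT S u <+ S := List.filter_sublist

lemma projT_append (S R : List Event) (u : ℕ) :
    projT (S ++ R) u = projT S u ++ projT R u := List.filter_append _ _

lemma projT_prefix {S' S : List Event} (h : S' <+: S) (u : ℕ) :
    projT S' u <+: projT S u := by
  obtain ⟨r, rfl⟩ := h
  exact ⟨projT r u, (projT_append S' r u).symm⟩

end Helpers
section Helpers2

open List

lemma acq_ne_req {f q : Event} {l l' : ℕ} (h1 : IsAcq f l) (h2 : IsReq q l') : f ≠ q := by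
  intro h
  subst h
  rw [IsAcq] at h1
  rw [IsReq] at h2
  rw [h1] at h2
  exact Op.noConfusion h2

lemma rel_ne_req {f q : Event} {l l' : ℕ} (h1 : IsRel f l) (h2 : IsReq q l') : f ≠ q := by
  intro h
  subst h
  rw [IsRel] at h1
  rw [IsReq] at h2
  rw [h1] at h2
  exact Op.noConfusion h2

lemma read_ne_req {f q : Event} {l l' : ℕ} (h1 : IsRead f l) (h2 : IsReq q l') : f ≠ q := by
  intro h
  subst h
  rw [IsRead] at h1
  rw [IsReq] at h2
  rw [h1] at h2
  exact Op.noConfusion h2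

lemma write_ne_req {f q : Event} {l l' : ℕ} (h1 : IsWrite f l) (h2 : IsReq q l') : f ≠ q := by
  intro h
  subst h
  rw [IsWrite] at h1
  rw [IsReq] at h2
  rw [h1] at h2
  exact Op.noConfusion h2

/-- Same-thread order transfers between a trace and any of its CRPs. -/
lemma crp_thd_trLt {T S : List Event} (hc : CRP T S) (hnT : T.Nodup)
    {x y : Event} (hx : x ∈ S) (hy : y ∈ S) (hthd : x.thd = y.thd) :
    TrLt S x y ↔ TrLt T x y := by
  obtain ⟨hwfS, hsub, hpre, _⟩ := hc
  have hnS := hwfS.nodup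
  set u := y.thd with hu
  have hxM : x ∈ projT S u := mem_projT.2 ⟨hx, hthd⟩
  have hyM : y ∈ projT S u := mem_projT.2 ⟨hy, rfl⟩
  have hxT : x ∈ T := hsub x hx
  have hyT : y ∈ T := hsub y hy
  have hxMT : x ∈ projT T u := mem_projT.2 ⟨hxT, hthd⟩
  have hyMT : y ∈ projT T u := mem_projT.2 ⟨hyT, rfl⟩
  constructor
  · intro h
    have h1 : TrLt (projT S u) x y := sublist_trLt (projT_sublist S u) hnS hxM hyM h
    have h2 : TrLt (projT T u) x y := (prefix_trLt (hpre u) hxM hyM).1 h1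
    exact sublist_trLt' (projT_sublist T u) hnT h2
  · intro h
    have h1 : TrLt (projT T u) x y :=
      sublist_trLt (projT_sublist T u) hnT hxMT hyMT h
    have h2 : TrLt (projT S u) x y := (prefix_trLt (hpre u) hxM hyM).2 h1
    exact sublist_trLt' (projT_sublist S u) hnS h2

lemma not_mem_erase_self {S : List Event} (hn : S.Nodup) (q : Event) : q ∉ S.erase q := by
  rw [hn.erase_eq_filter]
  intro h
  have := (List.mem_filter.1 h).2
  simp at this

lemma mem_erase_of_mem_ne {S : List Event} {x q : Event} (hx : x ∈ S) (hne : x ≠ q) :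
    x ∈ S.erase q := (List.mem_erase_of_ne hne).2 hx

lemma trLt_erase_append {S : List Event} (hn : S.Nodup) {q x y : Event}
    (hxq : x ≠ q) (hyq : y ≠ q) (h : TrLt S x y) :
    TrLt (S.erase q ++ [q]) x y := by
  have hxE : x ∈ S.erase q := mem_erase_of_mem_ne h.1 hxq
  have hyE : y ∈ S.erase q := mem_erase_of_mem_ne h.2.1 hyq
  have h1 : TrLt (S.erase q) x y := sublist_trLt (List.erase_sublist) hn hxE hyE h
  exact (prefix_trLt ⟨[q], rfl⟩ hxE hyE).1 h1

lemma trLt_erase_append' {S : List Event} (hn : S.Nodup) {q x y : Event}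
    (hxq : x ≠ q) (hyq : y ≠ q) (h : TrLt (S.erase q ++ [q]) x y) : TrLt S x y := by
  have hxE : x ∈ S.erase q := by
    rcases List.mem_append.1 h.1 with h' | h'
    · exact h'
    · simp at h'; exact absurd h' hxq
  have hyE : y ∈ S.erase q := by
    rcases List.mem_append.1 h.2.1 with h' | h'
    · exact h'
    · simp at h'; exact absurd h' hyq
  have h1 : TrLt (S.erase q) x y := (prefix_trLt ⟨[q], rfl⟩ hxE hyE).2 h
  exact sublist_trLt' (List.erase_sublist) hn h1

lemma trLt_erase_append_last {S : List Event} (hn : S.Nodup) {q x : Event}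
    (hq : q ∈ S) (hx : x ∈ S) (hxq : x ≠ q) : TrLt (S.erase q ++ [q]) x q := by
  have hxE : x ∈ S.erase q := mem_erase_of_mem_ne hx hxq
  refine ⟨List.mem_append.2 (Or.inl hxE), List.mem_append.2 (Or.inr (by simp)), ?_⟩
  rw [List.idxOf_append_of_mem hxE, List.idxOf_append_of_notMem (not_mem_erase_self hn q)]
  have h1 : (S.erase q).idxOf x < (S.erase q).length := List.idxOf_lt_length_iff.2 hxE
  simp only [List.idxOf_cons_self]
  omega

lemma not_trLt_erase_append_last {S : List Event} (hn : S.Nodup) {q x : Event}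
    (hq : q ∈ S) (h : TrLt (S.erase q ++ [q]) q x) : False := by
  by_cases hxq : x = q
  · rw [hxq] at h; exact trLt_irrefl _ q h
  · have hxS : x ∈ S := by
      rcases List.mem_append.1 h.2.1 with h' | h'
      · exact (List.erase_sublist).subset h'
      · rw [List.mem_singleton] at h'; exact absurd h' hxq
    exact trLt_asymm (trLt_erase_append_last hn hq hxS hxq) h

end Helpers2
section Helpers3

open List

/-- A prefix of a correctly reordered prefix is itself a CRP. -/
lemma crp_take {T S : List Event} (hc : CRP T S) (n : ℕ) : CRP T (S.take n) := by
  obtain ⟨hwfS, hsub, hpre, hlw⟩ := hc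
  have hp : S.take n <+: S := List.take_prefix n S
  have hns : S.Nodup := hwfS.nodup
  have hmem : ∀ {x : Event}, x ∈ S.take n → x ∈ S := fun hx => hp.subset hx
  have hidx : ∀ {x : Event}, x ∈ S.take n → S.idxOf x < n := fun hx => indexOf_lt_of_mem_take hx
  have hin : ∀ {x : Event}, x ∈ S → S.idxOf x < n → x ∈ S.take n :=
    fun hx h => mem_take_of_indexOf hx h
  have htr : ∀ {x y : Event}, x ∈ S.take n → y ∈ S.take n →
      (TrLt (S.take n) x y ↔ TrLt S x y) := fun hx hy => prefix_trLt hp hx hy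
  refine ⟨⟨hns.sublist hp.sublist, ?_, ?_, ?_, ?_⟩, ?_, ?_, ?_⟩
  · -- wfAcq
    intro a a' l ha ha' hacq hacq' hlt
    obtain ⟨r, hrS, hrel, hthd, h1, h2⟩ :=
      hwfS.wfAcq a a' l (hmem ha) (hmem ha') hacq hacq' ((htr ha ha').1 hlt)
    have hrin : r ∈ S.take n := hin hrS (lt_trans h2.2.2 (hidx ha'))
    exact ⟨r, hrin, hrel, hthd, (htr ha hrin).2 h1, (htr hrin ha').2 h2⟩
  · -- wfRel
    intro r l hr hrel
    obtain ⟨a, haS, hacq, hthd, h1, h2⟩ := hwfS.wfRel r l (hmem hr) hrel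
    have hain : a ∈ S.take n := hin haS (lt_trans h1.2.2 (hidx hr))
    refine ⟨a, hain, hacq, hthd, (htr hain hr).2 h1, ?_⟩
    intro r' hr' hrel' hcon
    exact h2 r' (hmem hr') hrel' ⟨(htr hain hr').1 hcon.1, (htr hr' hr).1 hcon.2⟩
  · -- wfReqBefore
    intro a l ha hacq
    obtain ⟨q, hqS, hqreq, hthd, h1, h2⟩ := hwfS.wfReqBefore a l (hmem ha) hacq
    have hqin : q ∈ S.take n := hin hqS (lt_trans h1.2.2 (hidx ha))
    refine ⟨q, hqin, hqreq, hthd, (htr hqin ha).2 h1, ?_⟩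
    intro f hf hfthd hcon
    exact h2 f (hmem hf) hfthd ⟨(htr hqin hf).1 hcon.1, (htr hf ha).1 hcon.2⟩
  · -- wfReqAfter
    intro q l e hq hqreq he hthd hlt hnb
    refine hwfS.wfReqAfter q l e (hmem hq) hqreq (hmem he) hthd ((htr hq he).1 hlt) ?_
    intro f hf hfthd hcon
    have hfin : f ∈ S.take n := hin hf (lt_trans hcon.2.2.2 (hidx he))
    exact hnb f hfin hfthd ⟨(htr hq hfin).2 hcon.1, (htr hfin he).2 hcon.2⟩
  · -- subset
    intro e he
    exact hsub e (hmem he)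
  · -- projections
    intro t
    exact (projT_prefix hp t).trans (hpre t)
  · -- last writes
    intro e w he hlwT
    obtain ⟨x, hrd, hwr, hwe, hnb⟩ := hlw e w (hmem he) hlwT
    have hwin : w ∈ S.take n := hin hwe.1 (lt_trans hwe.2.2 (hidx he))
    refine ⟨x, hrd, hwr, (htr hwin he).2 hwe, ?_⟩
    intro w' hw' hwrx hcon
    exact hnb w' (hmem hw') hwrx ⟨(htr hwin hw').1 hcon.1, (htr hw' he).1 hcon.2⟩

lemma projT_erase {S : List Event} (hn : S.Nodup) (q : Event) (t : ℕ) :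
    projT (S.erase q) t = (projT S t).erase q := by
  have hn2 : (projT S t).Nodup := hn.sublist (projT_sublist S t)
  rw [hn.erase_eq_filter, hn2.erase_eq_filter, projT, projT, List.filter_filter,
    List.filter_filter]
  apply List.filter_congr
  intro e _
  rw [Bool.and_comm]

lemma eq_erase_append_of_last {l : List Event} (hn : l.Nodup) {q : Event} (hq : q ∈ l)
    (hlast : ∀ f ∈ l, f ≠ q → l.idxOf f < l.idxOf q) : l.erase q ++ [q] = l := by
  induction l with
  | nil => cases hq
  | cons a l ih =>
    have hn2 := (List.nodup_cons.1 hn).2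
    have hanotin := (List.nodup_cons.1 hn).1
    by_cases haq : a = q
    · subst haq
      have hl : l = [] := by
        cases l with
        | nil => rfl
        | cons b l' =>
          exfalso
          have hbq : b ≠ a := fun h => hanotin (h ▸ List.mem_cons_self)
          have hlt := hlast b (List.mem_cons_of_mem a (List.mem_cons_self)) hbq
          rw [List.idxOf_cons_self] at hlt
          exact Nat.not_lt_zero _ hlt
      subst hl
      simp
    · have hq' : q ∈ l := by
        rcases List.mem_cons.1 hq with h | h
        · exact absurd h.symm haq
        · exact h
      have herase : (a :: l).erase q = a :: l.erase q := by
        rw [List.erase_cons_tail]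
        simp [beq_iff_eq]
        exact fun h => haq h
      rw [herase, List.cons_append]
      congr 1
      apply ih hn2 hq'
      intro f hf hfq
      have hfa : f ≠ a := fun h => hanotin (h ▸ hf)
      have := hlast f (List.mem_cons_of_mem a hf) hfq
      rw [List.idxOf_cons_ne _ (fun h => hfa h.symm),
        List.idxOf_cons_ne _ (fun h => haq h)] at this
      exact Nat.succ_lt_succ_iff.1 this

end Helpers3
section Helpers4

open List

/-- Moving a final (in its thread) request to the very end of a CRP yields a CRP. -/
lemma crp_moveReq {T S : List Event} (hc : CRP T S) {q : Event} {l0 : ℕ}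
    (hqS : q ∈ S) (hreq : IsReq q l0)
    (hfin : ∀ f ∈ S, f.thd = q.thd → ¬ TrLt S q f) :
    CRP T (S.erase q ++ [q]) := by
  obtain ⟨hwfS, hsub, hpre, hlw⟩ := hc
  have hns : S.Nodup := hwfS.nodup
  set E := S.erase q with hE
  have hqE : q ∉ E := not_mem_erase_self hns q
  have hperm : (E ++ [q]) ~ S := by
    refine (List.perm_append_comm).trans ?_
    exact (List.perm_cons_erase hqS).symm
  have hmem6 : ∀ {x : Event}, x ∈ E ++ [q] ↔ x ∈ S := fun {x} => hperm.mem_iff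
  have hn6 : (E ++ [q]).Nodup := (hperm.symm.nodup_iff).1 hns
  have htr1 : ∀ {x y : Event}, x ≠ q → y ≠ q → TrLt S x y → TrLt (E ++ [q]) x y :=
    fun hx hy h => trLt_erase_append hns hx hy h
  have htr1' : ∀ {x y : Event}, x ≠ q → y ≠ q → TrLt (E ++ [q]) x y → TrLt S x y :=
    fun hx hy h => trLt_erase_append' hns hx hy h
  have htr2 : ∀ {x : Event}, x ∈ S → x ≠ q → TrLt (E ++ [q]) x q :=
    fun hx hxq => trLt_erase_append_last hns hqS hx hxq
  have htr3 : ∀ {x : Event}, TrLt (E ++ [q]) q x → False :=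
    fun h => not_trLt_erase_append_last hns hqS h
  refine ⟨⟨hn6, ?_, ?_, ?_, ?_⟩, ?_, ?_, ?_⟩
  · -- wfAcq
    intro a a' l ha ha' hacq hacq' hlt
    have hqa : a ≠ q := acq_ne_req hacq hreq
    have hqa' : a' ≠ q := acq_ne_req hacq' hreq
    have haS : a ∈ S := hmem6.1 ha
    have ha'S : a' ∈ S := hmem6.1 ha'
    obtain ⟨r, hrS, hrel, hthd, h1, h2⟩ :=
      hwfS.wfAcq a a' l haS ha'S hacq hacq' (htr1' hqa hqa' hlt)
    have hrq : r ≠ q := rel_ne_req hrel hreq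
    exact ⟨r, hmem6.2 hrS, hrel, hthd, htr1 hqa hrq h1, htr1 hrq hqa' h2⟩
  · -- wfRel
    intro r l hr hrel
    have hrq : r ≠ q := rel_ne_req hrel hreq
    have hrS : r ∈ S := hmem6.1 hr
    obtain ⟨a, haS, hacq, hthd, h1, h2⟩ := hwfS.wfRel r l hrS hrel
    have haq : a ≠ q := acq_ne_req hacq hreq
    refine ⟨a, hmem6.2 haS, hacq, hthd, htr1 haq hrq h1, ?_⟩
    intro r' hr' hrel' hcon
    have hr'q : r' ≠ q := rel_ne_req hrel' hreq
    exact h2 r' (hmem6.1 hr') hrel' ⟨htr1' haq hr'q hcon.1, htr1' hr'q hrq hcon.2⟩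
  · -- wfReqBefore
    intro a l ha hacq
    have haq : a ≠ q := acq_ne_req hacq hreq
    have haS : a ∈ S := hmem6.1 ha
    obtain ⟨q0, hq0S, hq0req, hthd0, h1, h2⟩ := hwfS.wfReqBefore a l haS hacq
    have hq0q : q0 ≠ q := by
      intro h
      rw [h] at h1 hthd0
      exact hfin a haS hthd0.symm h1
    refine ⟨q0, hmem6.2 hq0S, hq0req, hthd0, htr1 hq0q haq h1, ?_⟩
    intro f hf hfthd hcon
    by_cases hfq : f = q
    · rw [hfq] at hcon
      exact htr3 hcon.2
    · exact h2 f (hmem6.1 hf) hfthd ⟨htr1' hq0q hfq hcon.1, htr1' hfq haq hcon.2⟩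
  · -- wfReqAfter
    intro q0 l e hq0 hq0req he hthd0 hlt hnb
    by_cases heq : e = q
    · exfalso
      rw [heq] at hlt hthd0 hnb
      have hq0q : q0 ≠ q := trLt_ne hlt
      have hq0S : q0 ∈ S := hmem6.1 hq0
      have hltS : TrLt S q0 q := by
        rcases trLt_tri hq0S hqS hq0q with h | h
        · exact h
        · exact absurd h (hfin q0 hq0S hthd0.symm)
      have hnbS : ∀ f ∈ S, f.thd = q0.thd → ¬ (TrLt S q0 f ∧ TrLt S f q) := by
        intro f hf hfthd hcon
        have hfq : f ≠ q := trLt_ne hcon.2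
        exact hnb f (hmem6.2 hf) hfthd ⟨htr1 hq0q hfq hcon.1, htr2 hf hfq⟩
      have hacqq : IsAcq q l := hwfS.wfReqAfter q0 l q hq0S hq0req hqS hthd0 hltS hnbS
      rw [IsAcq] at hacqq
      rw [IsReq] at hreq
      rw [hacqq] at hreq
      exact Op.noConfusion hreq
    · have heS : e ∈ S := hmem6.1 he
      have hq0q : q0 ≠ q := by
        intro h
        rw [h] at hlt
        exact htr3 hlt
      have hq0S : q0 ∈ S := hmem6.1 hq0
      refine hwfS.wfReqAfter q0 l e hq0S hq0req heS hthd0 (htr1' hq0q heq hlt) ?_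
      intro f hf hfthd hcon
      by_cases hfq : f = q
      · rw [hfq] at hcon hfthd
        exact hfin e heS (hthd0.trans hfthd.symm) hcon.2
      · exact hnb f (hmem6.2 hf) hfthd ⟨htr1 hq0q hfq hcon.1, htr1 hfq heq hcon.2⟩
  · -- subset
    intro e he
    exact hsub e (hmem6.1 he)
  · -- projections
    intro t
    by_cases ht : t = q.thd
    · subst ht
      have hqM : q ∈ projT S q.thd := mem_projT.2 ⟨hqS, rfl⟩
      have hnM : (projT S q.thd).Nodup := hns.sublist (projT_sublist S q.thd)
      have hlast : ∀ f ∈ projT S q.thd, f ≠ q →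
          (projT S q.thd).idxOf f < (projT S q.thd).idxOf q := by
        intro f hf hfq
        obtain ⟨hfS, hfthd⟩ := mem_projT.1 hf
        have h1 : TrLt S f q := by
          rcases trLt_tri hfS hqS hfq with h | h
          · exact h
          · exact absurd h (hfin f hfS hfthd)
        exact (sublist_trLt (projT_sublist S q.thd) hns hf hqM h1).2.2
      have heqM : (projT S q.thd).erase q ++ [q] = projT S q.thd :=
        eq_erase_append_of_last hnM hqM hlast
      have hproj : projT (E ++ [q]) q.thd = projT S q.thd := by
        rw [projT_append, hE, projT_erase hns]
        have : projT [q] q.thd = [q] := by simp [projT]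
        rw [this, heqM]
      rw [hproj]
      exact hpre q.thd
    · have hproj : projT (E ++ [q]) t = projT S t := by
        rw [projT_append, hE, projT_erase hns]
        have h1 : projT [q] t = [] := by
          simp [projT]
          exact fun h => ht h.symm
        have h2 : q ∉ projT S t := by
          intro h
          exact ht ((mem_projT.1 h).2).symm
        rw [h1, List.erase_of_not_mem h2, List.append_nil]
      rw [hproj]
      exact hpre t
  · -- last writes
    intro e w he hlwT
    have heS : e ∈ S := hmem6.1 he
    obtain ⟨x, hrd, hwr, hwe, hnb⟩ := hlw e w heS hlwT
    have heq : e ≠ q := read_ne_req hrd hreq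
    have hwq : w ≠ q := write_ne_req hwr hreq
    refine ⟨x, hrd, hwr, htr1 hwq heq hwe, ?_⟩
    intro w' hw' hw'x hcon
    have hw'q : w' ≠ q := write_ne_req hw'x hreq
    exact hnb w' (hmem6.1 hw') hw'x ⟨htr1' hwq hw'q hcon.1, htr1' hw'q heq hcon.2⟩

end Helpers4
theorem predictable_deadlock_stuck (T T' : List Event) (q1 q2 a1 : Event)
    (l1 l2 : ℕ) (hwf : WF T)
    (hq1 : IsReq q1 l1) (hq2 : IsReq q2 l2)
    (hthd : q1.thd ≠ q2.thd)
    (hcyc1 : ∃ t, (l1, t) ∈ LHAll T q2)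
    (hcyc2 : ∃ t, (l2, t) ∈ LHAll T q1)
    (hguard : HatInter (LHAll T q1) (LHAll T q2) = ∅)
    (hcrp : CRP T T') (hf1 : Final T' q1) (hf2 : Final T' q2)
    (hful : Fulfills T q1 a1) :
    ¬ ∃ T'', CRP T (T' ++ T'' ++ [a1]) := by
  classical
  rintro ⟨T'', hc2⟩
  set T2 := T' ++ T'' ++ [a1] with hT2def
  have hT2assoc : T2 = T' ++ (T'' ++ [a1]) := by
    rw [hT2def, List.append_assoc]
  have hwf2 : WF T2 := hc2.1
  have hn2 : T2.Nodup := hwf2.nodup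
  have hsub2 : ∀ e ∈ T2, e ∈ T := hc2.2.1
  -- a1 is the last event of T2
  have ha1nA : a1 ∉ T' ++ T'' := by
    intro h
    have := List.nodup_append.1 hn2
    exact this.2.2 a1 h a1 (List.mem_singleton.2 rfl) rfl
  have ha1T2 : a1 ∈ T2 := by
    rw [hT2def]
    exact List.mem_append.2 (Or.inr (List.mem_singleton.2 rfl))
  have hlast : ∀ e ∈ T2, e ≠ a1 → TrLt T2 e a1 := by
    intro e he hne
    have heA : e ∈ T' ++ T'' := by
      rcases List.mem_append.1 he with h | h
      · exact h
      · exact absurd (List.mem_singleton.1 h) hne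
    refine ⟨he, ha1T2, ?_⟩
    rw [hT2def, List.idxOf_append_of_notMem ha1nA, List.idxOf_append_of_mem heA]
    have := List.idxOf_lt_length_iff.2 heA
    simp only [List.idxOf_cons_self]
    omega
  -- witness is a prefix of T2
  have hpreT' : T' <+: T2 := ⟨T'' ++ [a1], hT2assoc.symm⟩
  have hq1T' : q1 ∈ T' := hf1.1
  have hq2T' : q2 ∈ T' := hf2.1
  have hq1T2 : q1 ∈ T2 := hpreT'.subset hq1T'
  have hq2T2 : q2 ∈ T2 := hpreT'.subset hq2T'
  -- unpack Fulfills
  obtain ⟨lf, hfreq, hfacq, hfthd, hflt, hfnb⟩ := hful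
  have hlf : lf = l1 := by
    have h1 := hfreq
    have h2 := hq1
    rw [IsReq] at h1 h2
    injection h1.symm.trans h2
  rw [hlf] at hfacq
  -- unpack the two lock-set facts
  obtain ⟨t, hmem1⟩ := hcyc1
  obtain ⟨a, r, hacq_a, hathd, hin1⟩ := hmem1
  obtain ⟨la, hacq_a', hrel_r, hthd_ar, haT, hrT, hmp_a_q2, hmp_q2_r, hcsm1⟩ := hin1
  have hacq_a2 : IsAcq a l1 := hacq_a
  have hla : la = l1 := by
    have h1 := hacq_a'
    have h2 := hacq_a2
    rw [IsAcq] at h1 h2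
    injection h1.symm.trans h2
  rw [hla] at hcsm1
  obtain ⟨s, hmem2⟩ := hcyc2
  obtain ⟨a', r', hacq_b, hbthd, hin2⟩ := hmem2
  obtain ⟨lb, hacq_b', hrel_r', hthd_br, hbT, hr'T, hmp_b_q1, hmp_q1_r', hcsm2⟩ := hin2
  have hacq_b2 : IsAcq a' l2 := hacq_b
  have hlb : lb = l2 := by
    have h1 := hacq_b'
    have h2 := hacq_b2
    rw [IsAcq] at h1 h2
    injection h1.symm.trans h2
  rw [hlb] at hcsm2
  -- positions of a and a' in T2
  obtain ⟨haT2, hlt_a_q2⟩ := hmp_a_q2 T2 hc2 hq2T2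
  obtain ⟨hbT2, hlt_b_q1⟩ := hmp_b_q1 T2 hc2 hq1T2
  -- q2 ≠ a1 and a ≠ a1
  have hq2_ne_a1 : q2 ≠ a1 := by
    intro h
    apply hthd
    rw [← hfthd, ← h]
  have ha_ne_a1 : a ≠ a1 := by
    intro h
    rw [h] at hlt_a_q2
    exact trLt_asymm (hlast q2 hq2T2 hq2_ne_a1) hlt_a_q2
  have hlt_a_a1 : TrLt T2 a a1 := hlast a haT2 ha_ne_a1
  -- the release of a's critical section in T2
  obtain ⟨rr, hrrT2, hrrRel, hrrThd, hlt_a_rr, hlt_rr_a1⟩ :=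
    hwf2.wfAcq a a1 l1 haT2 ha1T2 hacq_a2 hfacq hlt_a_a1
  have hrr_ne_q2 : rr ≠ q2 := rel_ne_req hrrRel hq2
  have hlt_q2_rr : TrLt T2 q2 rr := by
    rcases trLt_tri hrrT2 hq2T2 hrr_ne_q2 with h | h
    · exact absurd ⟨rr, T2, hsub2 rr hrrT2, hrrRel, hrrThd, hc2, hlt_a_rr, h⟩ hcsm1
    · exact h
  -- Lemma A: the only event of q1's thread after q1 in T2 is a1
  have lemA : ∀ f ∈ T2, f.thd = q1.thd → TrLt T2 q1 f → f = a1 := by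
    intro f hf hft hlt
    by_contra hne
    have hfT : f ∈ T := hsub2 f hf
    have h1 : TrLt T q1 f := (crp_thd_trLt hc2 hwf.nodup hq1T2 hf hft.symm).1 hlt
    have h2 : ¬ TrLt T f a1 := fun hh => hfnb f hfT hft ⟨h1, hh⟩
    have ha1T : a1 ∈ T := hflt.2.1
    have h3 : TrLt T a1 f := by
      rcases trLt_tri ha1T hfT (fun h => hne h.symm) with h | h
      · exact h
      · exact absurd h h2
    have h4 : TrLt T2 a1 f :=
      (crp_thd_trLt hc2 hwf.nodup ha1T2 hf (hfthd.trans hft.symm)).2 h3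
    exact trLt_asymm (hlast f hf hne) h4
  by_cases hB : ∃ f, f ∈ T2 ∧ f.thd = q2.thd ∧ TrLt T2 q2 f
  · -- Case B: q2's thread moves in T2; its next event must be an acquire of l2
    have hex : ∃ n : ℕ, ∃ f, (f ∈ T2 ∧ f.thd = q2.thd ∧ TrLt T2 q2 f) ∧ T2.idxOf f = n := by
      obtain ⟨f0, hf0⟩ := hB
      exact ⟨T2.idxOf f0, f0, hf0, rfl⟩
    obtain ⟨e2, he2p, he2i⟩ := Nat.find_spec hex
    obtain ⟨he2T2, he2thd, hlt_q2_e2⟩ := he2p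
    have hmin : ∀ f, (f ∈ T2 ∧ f.thd = q2.thd ∧ TrLt T2 q2 f) →
        ¬ T2.idxOf f < T2.idxOf e2 := by
      intro f hf hlt
      rw [he2i] at hlt
      exact Nat.find_min hex hlt ⟨f, hf, rfl⟩
    have hnb_e2 : ∀ f ∈ T2, f.thd = q2.thd → ¬ (TrLt T2 q2 f ∧ TrLt T2 f e2) := by
      intro f hf hft ⟨h1, h2⟩
      exact hmin f ⟨hf, hft, h1⟩ h2.2.2
    have hacq_e2 : IsAcq e2 l2 :=
      hwf2.wfReqAfter q2 l2 e2 hq2T2 hq2 he2T2 he2thd hlt_q2_e2 hnb_e2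
    -- e2 is not in the witness T'
    have he2nT' : e2 ∉ T' := by
      intro h
      exact hf2.2 e2 h he2thd ((prefix_trLt hpreT' hq2T' h).2 hlt_q2_e2)
    -- q1 is before e2 in T2
    have hlt_q1_e2 : TrLt T2 q1 e2 := by
      refine ⟨hq1T2, he2T2, ?_⟩
      have h1 : T2.idxOf q1 < T'.length := by
        rw [prefix_indexOf hpreT' hq1T']
        exact List.idxOf_lt_length_iff.2 hq1T'
      have h2 : T'.length ≤ T2.idxOf e2 := by
        rw [hT2assoc, List.idxOf_append_of_notMem he2nT']
        omega
      omega
    have hlt_b_e2 : TrLt T2 a' e2 := trLt_trans hlt_b_q1 hlt_q1_e2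
    have hb_ne_e2 : a' ≠ e2 := trLt_ne hlt_b_e2
    obtain ⟨p2, hp2T2, hp2Rel, hp2Thd, hlt_b_p2, hlt_p2_e2⟩ :=
      hwf2.wfAcq a' e2 l2 hbT2 he2T2 hacq_b2 hacq_e2 hlt_b_e2
    have hp2_ne_q1 : p2 ≠ q1 := rel_ne_req hp2Rel hq1
    have hlt_q1_p2 : TrLt T2 q1 p2 := by
      rcases trLt_tri hp2T2 hq1T2 hp2_ne_q1 with h | h
      · exact absurd ⟨p2, T2, hsub2 p2 hp2T2, hp2Rel, hp2Thd, hc2, hlt_b_p2, h⟩ hcsm2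
      · exact h
    -- build the reordering that places p2 before q1
    have he2_ne_a1 : e2 ≠ a1 := by
      intro h
      apply hthd
      rw [← hfthd, ← h, he2thd]
    have hlt_p2_a1 : TrLt T2 p2 a1 := trLt_trans hlt_p2_e2 (hlast e2 he2T2 he2_ne_a1)
    set n := T2.idxOf p2 + 1 with hn
    set P := T2.take n with hP
    have hcP : CRP T P := crp_take hc2 n
    have hnP : P.Nodup := hcP.1.nodup
    have htp : P <+: T2 := List.take_prefix n T2
    have hq1P : q1 ∈ P := mem_take_of_indexOf hq1T2 (by have := hlt_q1_p2.2.2; omega)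
    have hbP : a' ∈ P := mem_take_of_indexOf hbT2
      (by have h1 := hlt_b_q1.2.2; have h2 := hlt_q1_p2.2.2; omega)
    have hp2P : p2 ∈ P := mem_take_of_indexOf hp2T2 (by omega)
    have hfinP : ∀ f ∈ P, f.thd = q1.thd → ¬ TrLt P q1 f := by
      intro f hf hft hcon
      have hfT2 : f ∈ T2 := htp.subset hf
      have hconT2 : TrLt T2 q1 f := (prefix_trLt htp hq1P hf).1 hcon
      have hfa1 : f = a1 := lemA f hfT2 hft hconT2
      rw [hfa1] at hf
      have : T2.idxOf a1 < n := indexOf_lt_of_mem_take hf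
      have h2 := hlt_p2_a1.2.2
      omega
    have hc6 : CRP T (P.erase q1 ++ [q1]) := crp_moveReq hcP hq1P hq1 hfinP
    have hb_ne_q1 : a' ≠ q1 := acq_ne_req hacq_b2 hq1
    have hltP : TrLt P a' p2 := (prefix_trLt htp hbP hp2P).2 hlt_b_p2
    exact hcsm2 ⟨p2, P.erase q1 ++ [q1], hsub2 p2 hp2T2, hp2Rel, hp2Thd, hc6,
      trLt_erase_append hnP hb_ne_q1 hp2_ne_q1 hltP,
      trLt_erase_append_last hnP hq1P hp2P hp2_ne_q1⟩
  · -- Case A: q2's thread is frozen in T2: move q2 past rr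
    set n := T2.idxOf rr + 1 with hn
    set P := T2.take n with hP
    have hcP : CRP T P := crp_take hc2 n
    have hnP : P.Nodup := hcP.1.nodup
    have htp : P <+: T2 := List.take_prefix n T2
    have hq2P : q2 ∈ P := mem_take_of_indexOf hq2T2 (by have := hlt_q2_rr.2.2; omega)
    have haP : a ∈ P := mem_take_of_indexOf haT2
      (by have h1 := hlt_a_q2.2.2; have h2 := hlt_q2_rr.2.2; omega)
    have hrrP : rr ∈ P := mem_take_of_indexOf hrrT2 (by omega)
    have hfinP : ∀ f ∈ P, f.thd = q2.thd → ¬ TrLt P q2 f := by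
      intro f hf hft hcon
      exact hB ⟨f, htp.subset hf, hft, (prefix_trLt htp hq2P hf).1 hcon⟩
    have hc8 : CRP T (P.erase q2 ++ [q2]) := crp_moveReq hcP hq2P hq2 hfinP
    have ha_ne_q2 : a ≠ q2 := acq_ne_req hacq_a2 hq2
    have hltP : TrLt P a rr := (prefix_trLt htp haP hrrP).2 hlt_a_rr
    exact hcsm1 ⟨rr, P.erase q2 ++ [q2], hsub2 rr hrrT2, hrrRel, hrrThd, hc8,
      trLt_erase_append hnP ha_ne_q2 hrr_ne_q2 hltP,
      trLt_erase_append_last hnP hq2P hrrP hrr_ne_q2⟩
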